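/- arXiv:1210.0748 — 3 statements merged into one kernel-verified Lean document; each statement's English description precedes it below -/
import Mathlib

section
/- Let G = ⟨N, E, λ_N, λ_E⟩ be a graph, k ≥ 0, and {pId_0, …, pId_k} a k-partition identifier for G. Then for all nodes u, v ∈ N: pId_k(u) = pId_k(v) if and only if sig_k(u) = sig_k(v). -/
/-- A finite directed node- and edge-labeled graph `G = ⟨N, E, λ_N, λ_E⟩`:
`V` is the type of nodes, `edge u v` means `(u,v) ∈ E`, `nodeLabel` is `λ_N`,
and `edgeLabel` is `λ_E`. -/
structure LGraph (V LN LE : Type*) where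
  edge : V → V → Prop
  nodeLabel : V → LN
  edgeLabel : V → V → LE

variable {V LN LE : Type*}

/-- `kbisim G k u v` means `u ≈^k v`: nodes `u` and `v` are `k`-bisimilar. -/
def kbisim (G : LGraph V LN LE) : ℕ → V → V → Prop
  | 0, u, v => G.nodeLabel u = G.nodeLabel v
  | k+1, u, v => G.nodeLabel u = G.nodeLabel v ∧
      (∀ u', G.edge u u' → ∃ v', G.edge v v' ∧ kbisim G k u' v' ∧
        G.edgeLabel u u' = G.edgeLabel v v') ∧
      (∀ v', G.edge v v' → ∃ u', G.edge u u' ∧ kbisim G k v' u' ∧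
        G.edgeLabel v v' = G.edgeLabel u u')

/-- The `k`-bisimulation signature of node `u`: the pair `(pId 0 u, L)` where
`L = ∅` if `k = 0`, and `L` is the set of pairs `(λ_E(u,u'), pId (k-1) u')`
over all edges `(u,u') ∈ E` if `k > 0`. -/
def sig (G : LGraph V LN LE) (pId : ℕ → V → ℤ) (k : ℕ) (u : V) :
    ℤ × Set (LE × ℤ) :=
  (pId 0 u,
    if k = 0 then ∅
    else {p | ∃ u', G.edge u u' ∧ p = (G.edgeLabel u u', pId (k - 1) u')})

/-! Unfolding `u ≈^(k+1) v` gives equal node labels and a back-and-forth matching of outgoing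
edges up to edge label and `≈^k`. Since `pId k` has `≈^k` as its kernel, that matching says
exactly that `u` and `v` have the same set of pairs `(λ_E(u,u'), pId k u')`, and `pId 0` has
`≈^0` as its kernel: together this is equality of the signatures. -/

section LabeledSucc

variable {α : Type*}

def labeledSucc (G : LGraph V LN LE) (f : V → α) (u : V) : Set (LE × α) :=
  {p | ∃ u', G.edge u u' ∧ p = (G.edgeLabel u u', f u')}

theorem labeledSucc_subset_iff (G : LGraph V LN LE) (f : V → α) (u v : V) :
    labeledSucc G f u ⊆ labeledSucc G f v ↔
      ∀ u', G.edge u u' → ∃ v', G.edge v v' ∧ f u' = f v' ∧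
        G.edgeLabel u u' = G.edgeLabel v v' := by
  constructor
  · intro h u' hu'
    obtain ⟨v', hv', hp⟩ := h ⟨u', hu', rfl⟩
    obtain ⟨hl, hf⟩ := Prod.ext_iff.mp hp
    exact ⟨v', hv', hf, hl⟩
  · rintro h _ ⟨u', hu', rfl⟩
    obtain ⟨v', hv', hf, hl⟩ := h u' hu'
    exact ⟨v', hv', by rw [hl, hf]⟩

theorem kbisim_succ_iff_labeledSucc_eq (G : LGraph V LN LE) {k : ℕ} {f : V → α}
    (hf : ∀ a b, f a = f b ↔ kbisim G k a b) (u v : V) :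
    kbisim G (k + 1) u v ↔
      kbisim G 0 u v ∧ labeledSucc G f u = labeledSucc G f v := by
  simp only [kbisim, subset_antisymm_iff, labeledSucc_subset_iff, hf]

end LabeledSucc

theorem sig_succ (G : LGraph V LN LE) (pId : ℕ → V → ℤ) (k : ℕ) (u : V) :
    sig G pId (k + 1) u = (pId 0 u, labeledSucc G (pId k) u) := by
  simp [sig, labeledSucc]

/-- If `pId 0, …, pId k` is a `k`-partition identifier for `G`
(i.e., for every `i ≤ k` and all nodes `u, v`, `pId i u = pId i v` iff
`u ≈^i v`), then for all nodes `u, v`: `pId k u = pId k v` iff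
`sig k u = sig k v`. -/
theorem pid_eq_iff_sig_eq (G : LGraph V LN LE) (k : ℕ) (pId : ℕ → V → ℤ)
    (hpId : ∀ i ≤ k, ∀ u v : V, pId i u = pId i v ↔ kbisim G i u v)
    (u v : V) :
    pId k u = pId k v ↔ sig G pId k u = sig G pId k v := by
  cases k with
  | zero => simp [sig]
  | succ k =>
    rw [hpId (k + 1) le_rfl, kbisim_succ_iff_labeledSucc_eq G (hpId k k.le_succ),
      ← hpId 0 k.succ.zero_le, sig_succ, sig_succ, Prod.ext_iff]
end

section
/- Let G = ⟨N, E, λ_N, λ_E⟩ be a graph and k ≥ 0. For all nodes u, v ∈ N: u is Kaushik k-bisimilar to v (u ≈̂^k v) if and only if u is k-bisimilar to v (u ≈^k v). -/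
variable {V LN LE : Type*}

/-- `kbisimK G k u v` means `u` and `v` are Kaushik `k`-bisimilar
(written `u ≈̂^k v`). -/
def kbisimK (G : LGraph V LN LE) : ℕ → V → V → Prop
  | 0, u, v => G.nodeLabel u = G.nodeLabel v
  | k+1, u, v => kbisimK G k u v ∧
      (∀ u', G.edge u u' → ∃ v', G.edge v v' ∧ kbisimK G k u' v' ∧
        G.edgeLabel u u' = G.edgeLabel v v') ∧
      (∀ v', G.edge v v' → ∃ u', G.edge u u' ∧ kbisimK G k v' u' ∧
        G.edgeLabel v v' = G.edgeLabel u u')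

/-! The two definitions have the same back-and-forth clauses and differ only in the first one:
`≈^(k+1)` asks for equal labels, `≈̂^(k+1)` for `≈̂^k`. By induction the two relations agree at
level `k`, and then the clauses are interchangeable, since `≈^k` implies equal labels and, as
`≈^k` is antitone in `k`, equal labels together with the clauses for `≈^k` give `≈^k`. -/

namespace LGraph

def bisimStep (G : LGraph V LN LE) (R : V → V → Prop) (u v : V) : Prop :=
  (∀ u', G.edge u u' → ∃ v', G.edge v v' ∧ R u' v' ∧ G.edgeLabel u u' = G.edgeLabel v v') ∧
  (∀ v', G.edge v v' → ∃ u', G.edge u u' ∧ R v' u' ∧ G.edgeLabel v v' = G.edgeLabel u u')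

theorem bisimStep_mono (G : LGraph V LN LE) {R S : V → V → Prop} (hRS : ∀ x y, R x y → S x y)
    {u v : V} (h : G.bisimStep R u v) : G.bisimStep S u v := by
  obtain ⟨hforth, hback⟩ := h
  refine ⟨fun u' hu => ?_, fun v' hv => ?_⟩
  · obtain ⟨v', hv, hR, hl⟩ := hforth u' hu
    exact ⟨v', hv, hRS _ _ hR, hl⟩
  · obtain ⟨u', hu, hR, hl⟩ := hback v' hv
    exact ⟨u', hu, hRS _ _ hR, hl⟩

end LGraph

section

variable {G : LGraph V LN LE} {k : ℕ} {u v : V}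

theorem kbisim_succ_iff :
    kbisim G (k + 1) u v ↔ G.nodeLabel u = G.nodeLabel v ∧ G.bisimStep (kbisim G k) u v :=
  Iff.rfl

theorem kbisimK_succ_iff :
    kbisimK G (k + 1) u v ↔ kbisimK G k u v ∧ G.bisimStep (kbisimK G k) u v :=
  Iff.rfl

theorem kbisim_nodeLabel (h : kbisim G k u v) : G.nodeLabel u = G.nodeLabel v := by
  cases k with
  | zero => exact h
  | succ k => exact h.1

theorem kbisim_of_kbisim_succ (h : kbisim G (k + 1) u v) : kbisim G k u v := by
  induction k generalizing u v with
  | zero => exact h.1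
  | succ k ih =>
    obtain ⟨hlabel, hstep⟩ := kbisim_succ_iff.1 h
    exact kbisim_succ_iff.2 ⟨hlabel, G.bisimStep_mono (fun _ _ => ih) hstep⟩

end

/-- For every `k ≥ 0` and all nodes `u, v`: `u` is Kaushik
`k`-bisimilar to `v` iff `u` is `k`-bisimilar to `v`. -/
theorem kbisimK_iff_kbisim (G : LGraph V LN LE) (k : ℕ) (u v : V) :
    kbisimK G k u v ↔ kbisim G k u v := by
  induction k generalizing u v with
  | zero => rfl
  | succ k ih =>
    have hk : kbisimK G k = kbisim G k := funext fun u => funext fun v => propext (ih u v)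
    rw [kbisimK_succ_iff, kbisim_succ_iff, hk]
    exact ⟨fun ⟨h, hstep⟩ => ⟨kbisim_nodeLabel h, hstep⟩,
      fun h => ⟨kbisim_of_kbisim_succ (kbisim_succ_iff.2 h), h.2⟩⟩
end

section
/- Let G = ⟨N, E, λ_N, λ_E⟩ be a graph and k > 0. If I is a partition of G that refines the partition of N into equivalence classes of ≈^{k-1} and is stable with respect to it, then I refines the partition of N into equivalence classes of ≈^k. -/
variable {V LN LE : Type*}

/-- The set of equivalence classes of the relation `≈^k` on the nodes of `G`;
these classes form the `k`-bisimulation partition of `G`. -/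
def bisimClasses (G : LGraph V LN LE) (k : ℕ) : Set (Set V) :=
  {s | ∃ u : V, s = {v | kbisim G k u v}}

/-- `parents G ℓ J` is the set of nodes having an `ℓ`-labeled edge into the
set `J`. -/
def parents (G : LGraph V LN LE) (ℓ : LE) (J : Set V) : Set V :=
  {y | ∃ x ∈ J, G.edge y x ∧ G.edgeLabel y x = ℓ}

/-- Partition `I` refines partition `J`: every block of `I` is contained in
some block of `J`. -/
def Refines (I J : Set (Set V)) : Prop := ∀ s ∈ I, ∃ t ∈ J, s ⊆ t

/-- Partition `I` is stable with respect to partition `J`: for every block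
`s ∈ I`, every block `t ∈ J` and every edge label `ℓ`, either
`s ⊆ parents_ℓ(t)` or `s ∩ parents_ℓ(t) = ∅`. -/
def Stable (G : LGraph V LN LE) (I J : Set (Set V)) : Prop :=
  ∀ s ∈ I, ∀ t ∈ J, ∀ ℓ : LE, s ⊆ parents G ℓ t ∨ s ∩ parents G ℓ t = ∅

theorem kbisim_refl (G : LGraph V LN LE) : ∀ k u, kbisim G k u u
  | 0, _ => rfl
  | _ + 1, _ => ⟨rfl, fun u' h => ⟨u', h, kbisim_refl G _ u', rfl⟩,
      fun v' h => ⟨v', h, kbisim_refl G _ v', rfl⟩⟩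

theorem kbisim.nodeLabel_eq {G : LGraph V LN LE} :
    ∀ {k : ℕ} {u v : V}, kbisim G k u v → G.nodeLabel u = G.nodeLabel v
  | 0, _, _, h => h
  | _ + 1, _, _, h => h.1

theorem Stable.mem_parents_of_mem {G : LGraph V LN LE} {I J : Set (Set V)}
    (hstab : Stable G I J) {s t : Set V} (hs : s ∈ I) (ht : t ∈ J) {ℓ : LE} {u v : V}
    (hu : u ∈ s) (hv : v ∈ s) (hpar : u ∈ parents G ℓ t) : v ∈ parents G ℓ t :=
  (hstab s hs t ht ℓ).elim (fun hsub => hsub hv)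
    fun hdisj => (Set.eq_empty_iff_forall_notMem.mp hdisj u ⟨hu, hpar⟩).elim

/-- The `≈^m` class of `u'` has `u`, hence by stability every node of the block, among its
parents. -/
theorem Stable.exists_edge_kbisim {G : LGraph V LN LE} {I : Set (Set V)} {m : ℕ}
    (hstab : Stable G I (bisimClasses G m)) {s : Set V} (hs : s ∈ I) {u v u' : V}
    (hu : u ∈ s) (hv : v ∈ s) (huu' : G.edge u u') :
    ∃ v', G.edge v v' ∧ kbisim G m u' v' ∧ G.edgeLabel u u' = G.edgeLabel v v' := by
  have hpar : u ∈ parents G (G.edgeLabel u u') {x | kbisim G m u' x} :=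
    ⟨u', kbisim_refl G m u', huu', rfl⟩
  obtain ⟨v', hv', hvv', hlabel⟩ := hstab.mem_parents_of_mem hs ⟨u', rfl⟩ hu hv hpar
  exact ⟨v', hvv', hv', hlabel.symm⟩

theorem kbisim_succ_of_mem_stable_block {G : LGraph V LN LE} {I : Set (Set V)} {m : ℕ}
    (href : Refines I (bisimClasses G m)) (hstab : Stable G I (bisimClasses G m))
    {s : Set V} (hs : s ∈ I) {u v : V} (hu : u ∈ s) (hv : v ∈ s) :
    kbisim G (m + 1) u v := by
  obtain ⟨_, ⟨w, rfl⟩, hsw⟩ := href s hs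
  exact ⟨(hsw hu).nodeLabel_eq.symm.trans (hsw hv).nodeLabel_eq,
    fun _ huu' => hstab.exists_edge_kbisim hs hu hv huu',
    fun _ hvv' => hstab.exists_edge_kbisim hs hv hu hvv'⟩

/-- For `k > 0`, if `I` is a partition of the nodes of `G` that
refines the partition into equivalence classes of `≈^(k-1)` and is stable with
respect to it, then `I` refines the partition into equivalence classes of
`≈^k`. -/
theorem refines_bisimClasses_of_stable (G : LGraph V LN LE) (k : ℕ)
    (hk : 0 < k) (I : Set (Set V)) (hI : Setoid.IsPartition I)
    (href : Refines I (bisimClasses G (k - 1)))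
    (hstab : Stable G I (bisimClasses G (k - 1))) :
    Refines I (bisimClasses G k) := by
  obtain ⟨m, rfl⟩ := Nat.exists_eq_add_one_of_ne_zero hk.ne'
  rw [Nat.add_sub_cancel] at href hstab
  intro s hs
  obtain ⟨u, hu⟩ : s.Nonempty := Set.nonempty_iff_ne_empty.mpr fun h => hI.1 (h ▸ hs)
  exact ⟨_, ⟨u, rfl⟩, fun v hv => kbisim_succ_of_mem_stable_block href hstab hs hu hv⟩
end
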